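/- arXiv:1404.3458 — 2 statements merged into one kernel-verified Lean document; each statement's English description precedes it below -/
import Mathlib

section
/- Butterfly identity: for every 0 ≤ i < t, every 0 ≤ m < 2^i, and every x ∈ F, one has Δ_i^m(x + ω_{2^i}) = Δ_i^m(x) + Δ_{i+1}^{m+2^i}(x). -/
open Polynomial Finset

attribute [local instance] ZMod.algebra

/-- `ω_i = Σ_{j<r} i_j · v_j`, where `i_j` are the binary digits of `i`. -/
noncomputable def omegaF {F : Type*} [Field F] {r : ℕ} (v : Fin r → F) (i : ℕ) : F :=
  ∑ j : Fin r, if Nat.testBit i (j : ℕ) then v j else 0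

/-- The subspace vanishing polynomial `W_j(X) = ∏_{i=0}^{2^j-1} (X - ω_i)`. -/
noncomputable def Wpoly {F : Type*} [Field F] {r : ℕ} (v : Fin r → F) (j : ℕ) : Polynomial F :=
  ∏ i ∈ Finset.range (2 ^ j), (Polynomial.X - Polynomial.C (omegaF v i))

/-- The basis polynomial `X_i(X) = ∏_{j<r} (W_j(X)/W_j(ω_{2^j}))^{i_j}`. -/
noncomputable def Xpoly {F : Type*} [Field F] {r : ℕ} (v : Fin r → F) (i : ℕ) : Polynomial F :=
  ∏ j ∈ Finset.range r,
    if Nat.testBit i j then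
      Polynomial.C (((Wpoly v j).eval (omegaF v (2 ^ j)))⁻¹) * Wpoly v j
    else 1

/-- The recursively defined polynomials `Δ_i^m`:
`Δ_t^m = C (d m)` and `Δ_i^m = Δ_{i+1}^m + (W_i/W_i(ω_{2^i})) · Δ_{i+1}^{m+2^i}` for `i < t`. -/
noncomputable def Delta {F : Type*} [Field F] {r : ℕ} (v : Fin r → F) (d : ℕ → F)
    (t i m : ℕ) : Polynomial F :=
  if i < t then
    Delta v d t (i + 1) m +
      Polynomial.C (((Wpoly v i).eval (omegaF v (2 ^ i)))⁻¹) * Wpoly v i *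
        Delta v d t (i + 1) (m + 2 ^ i)
  else Polynomial.C (d m)
termination_by t - i
decreasing_by all_goals omega

/-- The constant `W'_l = (∏_{j=1}^{2^l-1} ω_j) / W_l(ω_{2^l})`. -/
noncomputable def Wd {F : Type*} [Field F] {r : ℕ} (v : Fin r → F) (l : ℕ) : F :=
  (∏ j ∈ Finset.Ico 1 (2 ^ l), omegaF v j) / (Wpoly v l).eval (omegaF v (2 ^ l))

/-! The map `x ↦ W_j(x)` is additive: from `W_{j+1}(x) = W_j(x) · W_j(x + ω_{2^j})` and induction on
`j`, the cross terms come with a factor `2 = 0`. Since `W_i` vanishes at `ω_{2^i}` for `i < j`, every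
`Δ_j^m` with `j > i` is invariant under `x ↦ x + ω_{2^i}`. Unfolding `Δ_i^m` once, the shift then
only changes `W_i(x)` into `W_i(x) + W_i(ω_{2^i})`, and the extra summand is exactly
`Δ_{i+1}^{m+2^i}(x)`; linear independence of the `v_j` makes the normalizer `W_i(ω_{2^i})` nonzero. -/

section Butterfly

variable {F : Type*} [Field F] {r : ℕ}

lemma omegaF_two_pow_add (v : Fin r → F) {j k : ℕ} (hk : k < 2 ^ j) :
    omegaF v (2 ^ j + k) = omegaF v (2 ^ j) + omegaF v k := by
  have hor : 2 ^ j + k = 2 ^ j ||| k := by simpa using Nat.two_pow_add_eq_or_of_lt hk 1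
  unfold omegaF
  rw [← Finset.sum_add_distrib]
  refine Finset.sum_congr rfl fun l _ => ?_
  rw [hor, Nat.testBit_or, Nat.testBit_two_pow]
  by_cases hjl : j = l
  · subst hjl
    simp [Nat.testBit_lt_two_pow hk]
  · simp [hjl]

lemma Wpoly_eval (v : Fin r → F) (j : ℕ) (x : F) :
    (Wpoly v j).eval x = ∏ k ∈ Finset.range (2 ^ j), (x - omegaF v k) := by
  simp [Wpoly, eval_prod]

lemma Wpoly_eval_omegaF_eq_zero (v : Fin r → F) {j k : ℕ} (hk : k < 2 ^ j) :
    (Wpoly v j).eval (omegaF v k) = 0 := by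
  rw [Wpoly_eval]
  exact Finset.prod_eq_zero (Finset.mem_range.mpr hk) (sub_self _)

lemma Delta_of_lt (v : Fin r → F) (d : ℕ → F) {t i : ℕ} (m : ℕ) (hi : i < t) :
    Delta v d t i m = Delta v d t (i + 1) m +
      C (((Wpoly v i).eval (omegaF v (2 ^ i)))⁻¹) * Wpoly v i * Delta v d t (i + 1) (m + 2 ^ i) := by
  rw [Delta, if_pos hi]

variable [CharP F 2]

lemma omegaF_ne_zero (v : Fin r → F) (hv : LinearIndependent (ZMod 2) v)
    {n : ℕ} (hn : n ≠ 0) (hnr : n < 2 ^ r) : omegaF v n ≠ 0 := by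
  intro hzero
  obtain ⟨i, hi⟩ := Nat.exists_testBit_of_ne_zero hn
  have hir : i < r := by
    by_contra! hri
    simp [Nat.testBit_lt_two_pow (hnr.trans_le (Nat.pow_le_pow_right two_pos hri))] at hi
  have hcoeff := Fintype.linearIndependent_iff.mp hv
    (fun j => if n.testBit j then 1 else 0) (by simpa [omegaF, ite_smul] using hzero) ⟨i, hir⟩
  simp [hi] at hcoeff

lemma Wpoly_eval_succ (v : Fin r → F) (j : ℕ) (x : F) :
    (Wpoly v (j + 1)).eval x
      = (Wpoly v j).eval x * (Wpoly v j).eval (x + omegaF v (2 ^ j)) := by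
  rw [Wpoly_eval, Wpoly_eval, Wpoly_eval, pow_succ, mul_two, Finset.prod_range_add]
  congr 1
  refine Finset.prod_congr rfl fun k hk => ?_
  rw [omegaF_two_pow_add v (Finset.mem_range.mp hk), CharTwo.sub_eq_add, CharTwo.sub_eq_add,
    add_assoc]

lemma Wpoly_eval_add (v : Fin r → F) (j : ℕ) (x y : F) :
    (Wpoly v j).eval (x + y) = (Wpoly v j).eval x + (Wpoly v j).eval y := by
  induction j generalizing x y with
  | zero => simp [Wpoly_eval, omegaF]
  | succ j ih =>
    simp only [Wpoly_eval_succ, ih]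
    linear_combination (Wpoly v j).eval x * (Wpoly v j).eval y * CharTwo.two_eq_zero (R := F)

lemma Wpoly_eval_omegaF_two_pow_ne_zero (v : Fin r → F) (hv : LinearIndependent (ZMod 2) v)
    {i : ℕ} (hir : i < r) : (Wpoly v i).eval (omegaF v (2 ^ i)) ≠ 0 := by
  rw [Wpoly_eval, Finset.prod_ne_zero_iff]
  intro k hk
  have hk := Finset.mem_range.mp hk
  rw [CharTwo.sub_eq_add, ← omegaF_two_pow_add v hk]
  refine omegaF_ne_zero v hv (by positivity) ?_
  calc 2 ^ i + k < 2 ^ (i + 1) := by rw [pow_succ]; omega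
    _ ≤ 2 ^ r := Nat.pow_le_pow_right two_pos hir

lemma Delta_eval_add_omegaF_two_pow (v : Fin r → F) (d : ℕ → F) (t : ℕ) {i j : ℕ} (hij : i < j)
    (m : ℕ) (x : F) :
    (Delta v d t j m).eval (x + omegaF v (2 ^ i)) = (Delta v d t j m).eval x := by
  by_cases hj : j < t
  · have hW : (Wpoly v j).eval (omegaF v (2 ^ i)) = 0 :=
      Wpoly_eval_omegaF_eq_zero v (Nat.pow_lt_pow_right one_lt_two hij)
    simp only [Delta_of_lt v d m hj, eval_add, eval_mul, eval_C, Wpoly_eval_add, hW, add_zero,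
      Delta_eval_add_omegaF_two_pow v d t (hij.trans j.lt_succ_self)]
  · rw [Delta, if_neg hj, eval_C, eval_C]
termination_by t - j

end Butterfly

theorem statement10_general (r : ℕ) (F : Type*) [Field F] [CharP F 2]
    (v : Fin r → F)
    (hv : LinearIndependent (ZMod 2) v) (t : ℕ) (htr : t ≤ r) (d : ℕ → F) :
    ∀ i < t, ∀ m < 2 ^ i, ∀ x : F,
      (Delta v d t i m).eval (x + omegaF v (2 ^ i))
        = (Delta v d t i m).eval x + (Delta v d t (i + 1) (m + 2 ^ i)).eval x := by
  intro i hi m _ x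
  have hW := Wpoly_eval_omegaF_two_pow_ne_zero v hv (hi.trans_le htr)
  simp only [Delta_of_lt v d m hi, eval_add, eval_mul, eval_C, Wpoly_eval_add,
    Delta_eval_add_omegaF_two_pow v d t i.lt_succ_self]
  field_simp
  ring

/-- Butterfly identity: for every `0 ≤ i < t`, `0 ≤ m < 2^i` and `x ∈ F`,
`Δ_i^m(x + ω_{2^i}) = Δ_i^m(x) + Δ_{i+1}^{m+2^i}(x)`. -/
theorem statement10 (r : ℕ) (hr : 1 ≤ r) (F : Type*) [Field F] [Fintype F] [CharP F 2]
    (hcard : Fintype.card F = 2 ^ r) (v : Fin r → F)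
    (hv : LinearIndependent (ZMod 2) v) (t : ℕ) (ht1 : 1 ≤ t) (htr : t ≤ r) (d : ℕ → F) :
    ∀ i < t, ∀ m < 2 ^ i, ∀ x : F,
      (Delta v d t i m).eval (x + omegaF v (2 ^ i))
        = (Delta v d t i m).eval x + (Delta v d t (i + 1) (m + 2 ^ i)).eval x :=
  statement10_general r F v hv t htr d
end

section
/- For every 0 ≤ i ≤ r−1, the formal derivative of W_i is the constant polynomial ∏_{j=1}^{2^i−1} ω_j (the product of all nonzero elements of the F₂-span of v_0, …, v_{i−1}, with the empty product for i = 0 equal to 1), and this constant is nonzero. -/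
/-! The points `ω_0, …, ω_{2^i-1}` form the `𝔽₂`-span `V` of `v_0, …, v_{i-1}`, listed without
repetition because the `v_j` are independent, so `W_i` is the nodal polynomial of the additive
group `V`. Its derivative has degree `< |V|` and at a node `a` takes the value `∏_{s ≠ a} (a - s)`,
which the translation `s ↦ a - s` turns into the product of the nonzero elements of `V`; a
polynomial of degree `< |V|` agreeing with a constant on `V` is that constant. -/

open Polynomial Finset

attribute [local instance] ZMod.algebra

namespace Lagrange

variable {R : Type*} [CommRing R] [DecidableEq R]

theorem prod_erase_sub_eq_prod_erase_zero {S : Finset R} (hsub : ∀ a ∈ S, ∀ b ∈ S, a - b ∈ S)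
    {a : R} (ha : a ∈ S) : ∏ s ∈ S.erase a, (a - s) = ∏ s ∈ S.erase 0, s :=
  prod_nbij' (a - ·) (a - ·)
    (fun s hs => mem_erase.2
      ⟨sub_ne_zero.2 (mem_erase.1 hs).1.symm, hsub a ha s (mem_erase.1 hs).2⟩)
    (fun t ht => mem_erase.2
      ⟨by simpa [sub_eq_self] using (mem_erase.1 ht).1, hsub a ha t (mem_erase.1 ht).2⟩)
    (fun _ _ => sub_sub_cancel a _) (fun _ _ => sub_sub_cancel a _) (fun _ _ => rfl)

theorem derivative_nodal_id_of_sub_mem [IsDomain R] {S : Finset R} (hS : S.Nonempty)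
    (hsub : ∀ a ∈ S, ∀ b ∈ S, a - b ∈ S) :
    derivative (nodal S id) = C (∏ s ∈ S.erase 0, s) := by
  refine eq_of_degrees_lt_of_eval_finset_eq S ?_ ?_ fun a ha => ?_
  · calc (derivative (nodal S id)).degree < (nodal S id).degree :=
          degree_derivative_lt nodal_ne_zero
      _ = #S := degree_nodal
  · exact degree_C_le.trans_lt (by exact_mod_cast hS.card_pos)
  · rw [eval_C, ← prod_erase_sub_eq_prod_erase_zero hsub ha, ← eval_nodal]
    exact eval_nodal_derivative_eval_node_eq (v := id) ha

end Lagrange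

section SubspaceEnumeration

variable {F : Type*} [Field F] {r : ℕ} {v : Fin r → F}

@[simp]
theorem omegaF_zero : omegaF v 0 = 0 := by
  simp [omegaF]

variable [CharP F 2]

theorem omegaF_xor (a b : ℕ) : omegaF v (a ^^^ b) = omegaF v a + omegaF v b := by
  simp only [omegaF, ← sum_add_distrib, Nat.testBit_xor]
  refine sum_congr rfl fun j _ => ?_
  cases a.testBit j <;> cases b.testBit j <;> simp [CharTwo.add_self_eq_zero]

theorem omegaF_eq_sum_smul (n : ℕ) :
    omegaF v n = ∑ j : Fin r, (if n.testBit j then 1 else 0 : ZMod 2) • v j := by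
  refine sum_congr rfl fun j _ => ?_
  split_ifs <;> simp

theorem eq_zero_of_omegaF_eq_zero (hv : LinearIndependent (ZMod 2) v) {n : ℕ} (hn : n < 2 ^ r)
    (h : omegaF v n = 0) : n = 0 := by
  rw [omegaF_eq_sum_smul] at h
  have hbits := Fintype.linearIndependent_iff.1 hv _ h
  refine Nat.eq_of_testBit_eq fun j => ?_
  rw [Nat.zero_testBit]
  by_cases hj : j < r
  · simpa using hbits ⟨j, hj⟩
  · exact Nat.testBit_lt_two_pow (hn.trans_le (Nat.pow_le_pow_right two_pos (not_lt.1 hj)))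

theorem omegaF_injOn (hv : LinearIndependent (ZMod 2) v) :
    Set.InjOn (omegaF v) (Set.Iio (2 ^ r)) := fun a ha b hb h =>
  xor_eq_zero_iff.1 <| eq_zero_of_omegaF_eq_zero hv (Nat.bitwise_lt_two_pow ha hb) <| by
    rw [omegaF_xor, h, CharTwo.add_self_eq_zero]

theorem omegaF_injOn_range (hv : LinearIndependent (ZMod 2) v) {i : ℕ} (hi : i ≤ r) :
    Set.InjOn (omegaF v) (range (2 ^ i)) :=
  (omegaF_injOn hv).mono fun _ hn => (mem_range.1 hn).trans_le (Nat.pow_le_pow_right two_pos hi)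

variable [DecidableEq F]

theorem sub_mem_image_omegaF (i : ℕ) :
    ∀ a ∈ (range (2 ^ i)).image (omegaF v), ∀ b ∈ (range (2 ^ i)).image (omegaF v),
      a - b ∈ (range (2 ^ i)).image (omegaF v) := by
  simp only [mem_image, mem_range, forall_exists_index, and_imp]
  rintro _ m hm rfl _ n hn rfl
  exact ⟨m ^^^ n, Nat.bitwise_lt_two_pow hm hn, by rw [omegaF_xor, CharTwo.sub_eq_add]⟩

theorem Wpoly_eq_nodal_image (hv : LinearIndependent (ZMod 2) v) {i : ℕ} (hi : i ≤ r) :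
    Wpoly v i = Lagrange.nodal ((range (2 ^ i)).image (omegaF v)) id := by
  rw [Lagrange.nodal_eq, prod_image (omegaF_injOn_range hv hi)]
  rfl

theorem prod_Ico_omegaF_eq_prod_image_erase (hv : LinearIndependent (ZMod 2) v) {i : ℕ}
    (hi : i ≤ r) :
    ∏ j ∈ Ico 1 (2 ^ i), omegaF v j = ∏ x ∈ ((range (2 ^ i)).image (omegaF v)).erase 0, x := by
  have hinj := omegaF_injOn_range hv hi
  have hIco : Ico 1 (2 ^ i) = range (2 ^ i) \ {0} := by
    ext; simp only [mem_Ico, mem_sdiff, mem_range, mem_singleton]; omega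
  have h0 : {0} ⊆ range (2 ^ i) := singleton_subset_iff.2 (mem_range.2 (Nat.two_pow_pos i))
  rw [← sdiff_singleton_eq_erase, ← omegaF_zero (v := v), ← image_singleton,
    ← image_sdiff_of_injOn hinj h0, prod_image (hinj.mono sdiff_subset), hIco]

end SubspaceEnumeration

theorem statement11_general (r : ℕ) (F : Type*) [Field F] [CharP F 2] (v : Fin r → F)
    (hv : LinearIndependent (ZMod 2) v) (i : ℕ) (hi : i ≤ r - 1) :
    Polynomial.derivative (Wpoly v i) = Polynomial.C (∏ j ∈ Finset.Ico 1 (2 ^ i), omegaF v j)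
      ∧ (∏ j ∈ Finset.Ico 1 (2 ^ i), omegaF v j) ≠ 0 := by
  classical
  have hir : i ≤ r := hi.trans (Nat.sub_le r 1)
  rw [Wpoly_eq_nodal_image hv hir, prod_Ico_omegaF_eq_prod_image_erase hv hir]
  refine ⟨Lagrange.derivative_nodal_id_of_sub_mem ⟨0, ?_⟩ (sub_mem_image_omegaF i),
    prod_ne_zero_iff.2 fun x hx => (mem_erase.1 hx).1⟩
  exact mem_image.2 ⟨0, mem_range.2 (Nat.two_pow_pos i), omegaF_zero⟩

/-- For every `0 ≤ i ≤ r-1`, the formal derivative of `W_i` is the constant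
polynomial `∏_{j=1}^{2^i-1} ω_j`, and this constant is nonzero. -/
theorem statement11 (r : ℕ) (hr : 1 ≤ r) (F : Type*) [Field F] [Fintype F] [CharP F 2]
    (hcard : Fintype.card F = 2 ^ r) (v : Fin r → F)
    (hv : LinearIndependent (ZMod 2) v) (i : ℕ) (hi : i ≤ r - 1) :
    Polynomial.derivative (Wpoly v i) = Polynomial.C (∏ j ∈ Finset.Ico 1 (2 ^ i), omegaF v j)
      ∧ (∏ j ∈ Finset.Ico 1 (2 ^ i), omegaF v j) ≠ 0 :=
  statement11_general r F v hv i hi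
end
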